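/- arXiv:1212.6623 — 2 statements merged into one kernel-verified Lean document; each statement's English description precedes it below -/
import Mathlib

section
/- Let t_1, …, t_n be pairwise distinct complex numbers and let P ∈ ℂ[z_1,…,z_n] be any polynomial. Then the n-fold iterated residue at infinity Res_{z=∞} of P(z_1,…,z_n) · (∏_{1≤i<j≤n} (z_i − z_j))² / ∏_{i=1}^{n} ∏_{j=1}^{n} (t_i − z_j) equals ∑_{σ ∈ S_n} P(t_{σ(1)},…,t_{σ(n)}) · (∏_{1≤i<j≤n} (t_{σ(i)} − t_{σ(j)}))² / ∏_{1≤i≠j≤n} (t_{σ(i)} − t_{σ(j)}), the sum being over all permutations σ of {1,…,n}; equivalently, it equals (−1)^{n(n−1)/2} ∑_{σ ∈ S_n} P(t_{σ(1)},…,t_{σ(n)}). (This is the key intermediate residue computation, the step marked ⋆, in the proof of Formula 1: the squared Vandermonde numerator forces the residues to be taken at pairwise distinct points t_{k_1},…,t_{k_n}.) -/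
/-!
Expanding `P · Vand²` into monomials separates the variables, so the iterated integral is a
combination of products of one-variable integrals `∮ ζ ^ a / ∏ᵢ (ζ - tᵢ)`. By partial fractions
(the barycentric form of Lagrange interpolation) each of these is `2πi ∑ᵢ wᵢ tᵢ ^ a` with
`wᵢ = ∏_{j ≠ i} (tᵢ - tⱼ)⁻¹`. Recombining, the residue is the sum over all maps `k : [n] → [n]`
of `(P · Vand²)(t ∘ k) ∏ⱼ w_{k j}`. The squared Vandermonde kills every non-injective `k`, and
for a permutation `σ` the weight `∏ⱼ w_{σ j}` is the inverse of
`∏_{i ≠ j} (t_{σ i} - t_{σ j}) = (-1)^{n(n-1)/2} Vand(t ∘ σ)²`.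
-/

/-- The iterated circle integral `∮_{|z_n|=R n} ⋯ ∮_{|z_1|=R 1} f dz_1⋯dz_n`,
with each circle centered at `0` and traversed counterclockwise; the innermost
integral is over the first variable, the outermost over the last. -/
noncomputable def iterCircleIntegral : (n : ℕ) → ((Fin n → ℂ) → ℂ) → (Fin n → ℝ) → ℂ
  | 0, f, _ => f Fin.elim0
  | n + 1, f, R =>
      ∮ z in C(0, R (Fin.last n)),
        iterCircleIntegral n (fun w => f (Fin.snoc w z)) (fun i => R i.castSucc)

/-- The iterated residue at infinity
`Res_{z=∞} f := (−1)ⁿ (2πi)⁻ⁿ ∮_{|z_n|=R n} ⋯ ∮_{|z_1|=R 1} f dz_1⋯dz_n`. -/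
noncomputable def iterResInfty (n : ℕ) (f : (Fin n → ℂ) → ℂ) (R : Fin n → ℝ) : ℂ :=
  (-1) ^ n * ((2 * (Real.pi : ℂ) * Complex.I) ^ n)⁻¹ * iterCircleIntegral n f R

open Finset Function Metric Polynomial Lagrange Complex Real

theorem circleIntegral.integral_congr_abs {E : Type*} [NormedAddCommGroup E] [NormedSpace ℂ E]
    {f g : ℂ → E} {c : ℂ} {R : ℝ} (h : Set.EqOn f g (sphere c |R|)) :
    (∮ z in C(c, R), f z) = ∮ z in C(c, R), g z :=
  intervalIntegral.integral_congr fun θ _ => by simp only [h (circleMap_mem_sphere' c R θ)]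

theorem circleIntegral.integral_polynomial_eval (N : ℂ[X]) (c : ℂ) (R : ℝ) :
    (∮ z in C(c, R), N.eval z) = 0 := by
  simp_rw [eval_eq_sum_range]
  rw [circleIntegral.integral_fun_sum (f := fun k z => N.coeff k * z ^ k) fun k _ =>
    (continuous_const.mul (continuous_pow k)).continuousOn.circleIntegrable']
  refine sum_eq_zero fun k _ => ?_
  have hk := circleIntegral.integral_sub_zpow_of_ne (n := (k : ℤ)) (by omega) c 0 R
  simp only [sub_zero, zpow_natCast] at hk
  rw [circleIntegral.integral_const_mul, hk, mul_zero]

theorem ne_of_mem_sphere_of_norm_lt {z w : ℂ} {R : ℝ} (hz : z ∈ sphere (0 : ℂ) |R|)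
    (hw : ‖w‖ < R) : z ≠ w := by
  rintro rfl
  rw [mem_sphere_zero_iff_norm] at hz
  exact hw.not_ge (hz ▸ le_abs_self R)

-- Partial fractions: `N / nodal s v = N /ₘ nodal s v + ∑ᵢ wᵢ N(vᵢ) / (z - vᵢ)`, by the first
-- barycentric form of the Lagrange interpolant of `N` at the nodes, which is `N %ₘ nodal s v`.
theorem circleIntegral_eval_div_eval_nodal {ι : Type*} [DecidableEq ι] {s : Finset ι}
    {v : ι → ℂ} (hvs : Set.InjOn v s) {R : ℝ} (hR : ∀ i ∈ s, ‖v i‖ < R) (N : ℂ[X]) :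
    (∮ z in C(0, R), N.eval z / (nodal s v).eval z) =
      2 * π * I * ∑ i ∈ s, nodalWeight s v i * N.eval (v i) := by
  have hnode : ∀ z ∈ sphere (0 : ℂ) |R|, ∀ i ∈ s, z ≠ v i := fun z hz i hi =>
    ne_of_mem_sphere_of_norm_lt hz (hR i hi)
  have hrem : N %ₘ nodal s v = interpolate s v fun i => N.eval (v i) := by
    refine eq_interpolate_of_eval_eq _ hvs ?_ fun i hi => ?_
    · rw [← degree_nodal (v := v)]
      exact degree_modByMonic_lt _ nodal_monic
    · conv_rhs => rw [← modByMonic_add_div N (nodal s v)]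
      rw [eval_add, eval_mul, eval_nodal_at_node hi, zero_mul, add_zero]
  have hsplit : Set.EqOn (fun z => N.eval z / (nodal s v).eval z)
      (fun z => (N /ₘ nodal s v).eval z +
        ∑ i ∈ s, nodalWeight s v i * N.eval (v i) * (z - v i)⁻¹)
      (sphere 0 |R|) := by
    intro z hz
    have hz0 : (nodal s v).eval z ≠ 0 := eval_nodal_not_at_node (hnode z hz)
    dsimp only
    conv_lhs => rw [← modByMonic_add_div N (nodal s v), hrem]
    rw [eval_add, eval_mul, eval_interpolate_not_at_node _ (hnode z hz)]
    field_simp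
    exact add_comm _ _
  have hpole : ∀ i ∈ s,
      CircleIntegrable (fun z => nodalWeight s v i * N.eval (v i) * (z - v i)⁻¹) 0 R :=
    fun i hi => (circleIntegrable_sub_inv_iff.2 (Or.inr fun h => hnode _ h i hi rfl)).const_smul
  rw [circleIntegral.integral_congr_abs hsplit, circleIntegral.integral_add
      (N /ₘ nodal s v).continuous.continuousOn.circleIntegrable'
      (CircleIntegrable.fun_sum _ hpole),
    circleIntegral.integral_polynomial_eval, zero_add,
    circleIntegral.integral_fun_sum hpole, mul_sum]
  refine sum_congr rfl fun i hi => ?_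
  rw [circleIntegral.integral_const_mul, circleIntegral.integral_sub_inv_of_mem_ball
    (mem_ball_zero_iff.2 (hR i hi)), mul_comm]

-- Stated for finite sums of products so that each inner integral is known in closed form:
-- this is what makes the next integral integrable.
theorem iterCircleIntegral_sum_mul_prod {S : Type*} (s : Finset S) {n : ℕ} (c : S → ℂ)
    (g : S → Fin n → ℂ → ℂ) (R : Fin n → ℝ)
    (hg : ∀ a ∈ s, ∀ j, CircleIntegrable (g a j) 0 (R j)) :
    iterCircleIntegral n (fun z => ∑ a ∈ s, c a * ∏ j, g a j (z j)) R =
      ∑ a ∈ s, c a * ∏ j, ∮ ζ in C(0, R j), g a j ζ := by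
  induction n generalizing c with
  | zero => simp [iterCircleIntegral]
  | succ n ih =>
    set K : S → ℂ := fun a => c a * ∏ j : Fin n, ∮ ζ in C(0, R j.castSucc), g a j.castSucc ζ
    have hinner : ∀ ζ, iterCircleIntegral n
        (fun w => ∑ a ∈ s, c a * ∏ j, g a j (Fin.snoc w ζ j))
          (fun j => R j.castSucc) = ∑ a ∈ s, K a * g a (Fin.last n) ζ := by
      intro ζ
      simpa only [Fin.prod_univ_castSucc, Fin.snoc_castSucc, Fin.snoc_last, K, mul_assoc,
        mul_right_comm _ (g _ (Fin.last n) ζ)] using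
        ih (fun a => c a * g a (Fin.last n) ζ) (fun a j => g a j.castSucc) _
          fun a ha j => hg a ha j.castSucc
    rw [iterCircleIntegral]
    simp_rw [hinner]
    rw [circleIntegral.integral_fun_sum (f := fun a z => K a * g a (Fin.last n) z)
      fun a ha => (hg a ha (Fin.last n)).const_smul]
    simp_rw [circleIntegral.integral_const_mul, Fin.prod_univ_castSucc, K, mul_assoc]

section Residues

variable {ι : Type*} [Fintype ι] [DecidableEq ι] {t : ι → ℂ}

theorem iterCircleIntegral_eval_div_prod_eval_nodal (ht : Injective t) {n : ℕ} {R : Fin n → ℝ}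
    (hR : ∀ j i, ‖t i‖ < R j) (Q : MvPolynomial (Fin n) ℂ) :
    iterCircleIntegral n (fun z => MvPolynomial.eval z Q / ∏ j, (nodal univ t).eval (z j)) R =
      (2 * π * I) ^ n * ∑ k : Fin n → ι,
        MvPolynomial.eval (fun j => t (k j)) Q * ∏ j, nodalWeight univ t (k j) := by
  have hsep : (fun z => MvPolynomial.eval z Q / ∏ j, (nodal univ t).eval (z j)) = fun z =>
      ∑ d ∈ Q.support, Q.coeff d * ∏ j, z j ^ d j / (nodal univ t).eval (z j) := by
    ext z
    simp_rw [MvPolynomial.eval_eq', sum_div, prod_div_distrib, mul_div_assoc]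
  have hint : ∀ d ∈ Q.support, ∀ j, CircleIntegrable
      (fun ζ => ζ ^ d j / (nodal univ t).eval ζ) 0 (R j) := fun d _ j =>
    ((continuous_pow _).continuousOn.div (nodal univ t).continuous.continuousOn
      fun ζ hζ => eval_nodal_not_at_node fun i _ =>
        ne_of_mem_sphere_of_norm_lt hζ (hR j i)).circleIntegrable'
  rw [hsep, iterCircleIntegral_sum_mul_prod _ _ _ _ hint]
  simp_rw [← eval_X_pow (R := ℂ),
    circleIntegral_eval_div_eval_nodal ht.injOn fun i _ => hR _ i, eval_X_pow]
  simp_rw [prod_mul_distrib, prod_const, card_univ, Fintype.card_fin, Fintype.prod_sum,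
    MvPolynomial.eval_eq', mul_sum, sum_mul]
  rw [sum_comm]
  refine sum_congr rfl fun k _ => ?_
  rw [mul_sum]
  refine sum_congr rfl fun d _ => ?_
  rw [prod_mul_distrib]
  ring

-- The sign collects `(-1)ⁿ` from `iterResInfty` and `(-1)^(n · card ι)` from
-- `tᵢ - zⱼ = -(zⱼ - tᵢ)`.
theorem iterResInfty_eval_div_prod_prod_sub (ht : Injective t) {n : ℕ} {R : Fin n → ℝ}
    (hR : ∀ j i, ‖t i‖ < R j) (Q : MvPolynomial (Fin n) ℂ) :
    iterResInfty n (fun z => MvPolynomial.eval z Q / ∏ i, ∏ j, (t i - z j)) R =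
      (-1) ^ (n * (Fintype.card ι + 1)) * ∑ k : Fin n → ι,
        MvPolynomial.eval (fun j => t (k j)) Q * ∏ j, nodalWeight univ t (k j) := by
  set ε : ℂ := (-1) ^ (n * Fintype.card ι)
  have hε : ε⁻¹ = ε := by rw [← inv_pow, inv_neg, inv_one]
  have hf : (fun z => MvPolynomial.eval z Q / ∏ i, ∏ j, (t i - z j)) =
      fun z => MvPolynomial.eval z (MvPolynomial.C ε * Q) / ∏ j, (nodal univ t).eval (z j) := by
    ext z
    have : ∏ i, ∏ j, (t i - z j) = ε * ∏ j, (nodal univ t).eval (z j) := by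
      calc ∏ i, ∏ j, (t i - z j) = ∏ j, ∏ i, -(z j - t i) := by
            rw [prod_comm]; simp only [neg_sub]
        _ = _ := by
          simp_rw [prod_neg, prod_mul_distrib, prod_const, eval_nodal, card_univ,
            Fintype.card_fin, ← pow_mul, ε, mul_comm]
    rw [this, map_mul, MvPolynomial.eval_C, div_mul_eq_div_div_swap, div_eq_mul_inv _ ε, hε,
      mul_comm, mul_div_assoc]
  simp_rw [iterResInfty, hf, iterCircleIntegral_eval_div_prod_eval_nodal ht hR, map_mul,
    MvPolynomial.eval_C, mul_assoc, ← mul_sum]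
  field_simp [two_pi_I_ne_zero]
  simp only [ε, ← pow_add]
  ring

end Residues

theorem Fintype.sum_eq_sum_perm_of_not_injective {α M : Type*} [Fintype α] [DecidableEq α]
    [AddCommMonoid M] {f : (α → α) → M} (hf : ∀ k, ¬ Injective k → f k = 0) :
    ∑ k, f k = ∑ σ : Equiv.Perm α, f σ := by
  let coe : Equiv.Perm α ↪ (α → α) := ⟨(⇑), DFunLike.coe_injective⟩
  calc ∑ k, f k = ∑ k ∈ univ.map coe, f k := by
        refine (Finset.sum_subset (subset_univ _) fun k _ hk => hf k fun hinj => hk ?_).symm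
        exact mem_map.2
          ⟨Equiv.ofBijective k (Finite.injective_iff_bijective.1 hinj), mem_univ _, rfl⟩
    _ = ∑ σ : Equiv.Perm α, f σ := sum_map _ _ _

section Pairs

variable {ι : Type*} [Fintype ι]

theorem prod_filter_ne_eq_prod_prod_erase {M : Type*} [CommMonoid M] [DecidableEq ι]
    (g : ι × ι → M) :
    ∏ p ∈ univ.filter (fun p : ι × ι => p.1 ≠ p.2), g p = ∏ i, ∏ j ∈ univ.erase i, g (i, j) := by
  rw [prod_filter, Fintype.prod_prod_type]
  refine prod_congr rfl fun i _ => ?_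
  rw [← prod_filter, filter_ne]

theorem prod_nodalWeight_univ {F : Type*} [Field F] [DecidableEq ι] (x : ι → F) :
    ∏ i, nodalWeight univ x i =
      (∏ p ∈ univ.filter (fun p : ι × ι => p.1 ≠ p.2), (x p.1 - x p.2))⁻¹ := by
  simp_rw [nodalWeight, prod_filter_ne_eq_prod_prod_erase, prod_inv_distrib]

theorem nodalWeight_univ_perm {F : Type*} [Field F] [DecidableEq ι] (x : ι → F)
    (σ : Equiv.Perm ι) (i : ι) :
    nodalWeight univ x (σ i) = nodalWeight univ (fun j => x (σ j)) i :=
  (prod_equiv σ (by simp) fun _ _ => rfl).symm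

variable [LinearOrder ι] {R : Type*} [CommRing R]

theorem prod_filter_ne_sub_eq_neg_one_pow_mul_sq (x : ι → R) :
    ∏ p ∈ univ.filter (fun p : ι × ι => p.1 ≠ p.2), (x p.1 - x p.2) =
      (-1) ^ (Fintype.card ι).choose 2 *
        (∏ p ∈ univ.filter (fun p : ι × ι => p.1 < p.2), (x p.1 - x p.2)) ^ 2 := by
  have hne : univ.filter (fun p : ι × ι => p.1 ≠ p.2) =
      univ.filter (fun p : ι × ι => p.1 < p.2) ∪ univ.filter (fun p : ι × ι => p.2 < p.1) := by
    ext
    simp only [mem_filter, mem_univ, true_and, mem_union]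
    exact ne_iff_lt_or_gt
  have hswap : ∏ p ∈ univ.filter (fun p : ι × ι => p.2 < p.1), (x p.1 - x p.2) =
      ∏ p ∈ univ.filter (fun p : ι × ι => p.1 < p.2), -(x p.1 - x p.2) :=
    prod_nbij' Prod.swap Prod.swap (by simp) (by simp) (by simp) (by simp) (by simp)
  rw [hne, prod_union (disjoint_filter.2 fun p _ h => h.not_gt), hswap, prod_neg,
    Fintype.card_product_filter_lt]
  ring

theorem prod_filter_lt_sub_eq_zero_of_not_injective {x : ι → R} (hx : ¬ Injective x) :
    ∏ p ∈ univ.filter (fun p : ι × ι => p.1 < p.2), (x p.1 - x p.2) = 0 := by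
  obtain ⟨a, b, hab, hne⟩ := not_injective_iff.1 hx
  rcases hne.lt_or_gt with h | h
  · exact prod_eq_zero (mem_filter.2 ⟨mem_univ (a, b), h⟩) (sub_eq_zero.2 hab)
  · exact prod_eq_zero (mem_filter.2 ⟨mem_univ (b, a), h⟩) (sub_eq_zero.2 hab.symm)

end Pairs

/-- the step ⋆ in the proof of Formula 1: for pairwise distinct
`t₁,…,t_n` and any polynomial `P`, the `n`-fold iterated residue at infinity of
`P(z) · Vand(z)² / ∏_{i,j}(t_i − z_j)` equals
`∑_{σ ∈ S_n} P(t_{σ(1)},…,t_{σ(n)}) Vand(t_σ)² / ∏_{i≠j}(t_{σ(i)} − t_{σ(j)})`,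
and equivalently `(−1)^{n(n−1)/2} ∑_{σ ∈ S_n} P(t_{σ(1)},…,t_{σ(n)})`. -/
theorem squared_vandermonde_residue (n : ℕ) (t : Fin n → ℂ) (ht : Function.Injective t)
    (P : MvPolynomial (Fin n) ℂ)
    (R : Fin n → ℝ) (hR : ∀ j i, ‖t i‖ < R j) :
    (iterResInfty n (fun z =>
        MvPolynomial.eval z P *
          (∏ p ∈ Finset.univ.filter (fun p : Fin n × Fin n => p.1 < p.2),
            (z p.1 - z p.2)) ^ 2 /
          ∏ i : Fin n, ∏ j : Fin n, (t i - z j)) R =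
      ∑ σ : Equiv.Perm (Fin n),
        MvPolynomial.eval (fun i => t (σ i)) P *
          (∏ p ∈ Finset.univ.filter (fun p : Fin n × Fin n => p.1 < p.2),
            (t (σ p.1) - t (σ p.2))) ^ 2 /
          ∏ p ∈ Finset.univ.filter (fun p : Fin n × Fin n => p.1 ≠ p.2),
            (t (σ p.1) - t (σ p.2))) ∧
    (iterResInfty n (fun z =>
        MvPolynomial.eval z P *
          (∏ p ∈ Finset.univ.filter (fun p : Fin n × Fin n => p.1 < p.2),
            (z p.1 - z p.2)) ^ 2 /
          ∏ i : Fin n, ∏ j : Fin n, (t i - z j)) R =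
      (-1 : ℂ) ^ (n * (n - 1) / 2) *
        ∑ σ : Equiv.Perm (Fin n), MvPolynomial.eval (fun i => t (σ i)) P) := by
  have key := iterResInfty_eval_div_prod_prod_sub ht hR (P *
    (∏ p ∈ univ.filter (fun p : Fin n × Fin n => p.1 < p.2),
      (MvPolynomial.X p.1 - MvPolynomial.X p.2)) ^ 2)
  simp only [map_mul, map_pow, map_prod, map_sub, MvPolynomial.eval_X, Fintype.card_fin,
    (Nat.even_mul_succ_self n).neg_one_pow, one_mul] at key
  rw [Fintype.sum_eq_sum_perm_of_not_injective fun k hk => by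
    rw [prod_filter_lt_sub_eq_zero_of_not_injective (x := fun i => t (k i)) fun h => hk h.of_comp]
    ring] at key
  simp_rw [nodalWeight_univ_perm, prod_nodalWeight_univ, ← div_eq_mul_inv] at key
  refine ⟨key, key.trans ?_⟩
  rw [mul_sum]
  refine sum_congr rfl fun σ _ => ?_
  have hV : ∏ p ∈ univ.filter (fun p : Fin n × Fin n => p.1 < p.2), (t (σ p.1) - t (σ p.2)) ≠ 0 :=
    prod_ne_zero_iff.2 fun p hp => sub_ne_zero.2 ((ht.comp σ.injective).ne (mem_filter.1 hp).2.ne)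
  rw [prod_filter_ne_sub_eq_neg_one_pow_mul_sq (fun i => t (σ i)), Fintype.card_fin,
    Nat.choose_two_right]
  field_simp
  rw [← pow_mul, (even_two.mul_left _).neg_one_pow, mul_one]
end

section
/- Let t_1, …, t_n be complex numbers with t_i ≠ 0 for all i and t_i² ≠ t_j² for all i ≠ j, and let V ∈ ℂ[z_1,…,z_n] be a symmetric polynomial. Then the n-fold iterated residue at infinity Res_{z=∞} of V(z_1,…,z_n) · ∏_{1≤i<j≤n} (z_j − z_i) / [ ∏_{i=1}^{n} (t_i − z_i)(t_i + z_i) · ∏_{1≤i<j≤n} (t_i + t_j)(t_j − t_i) ] equals ∑_{ε ∈ {±1}^n} V(ε_1 t_1, …, ε_n t_n) / ∏_{1≤i≤j≤n} (ε_i t_i + ε_j t_j), where for i = j the factor in the denominator is 2ε_i t_i. (This is Formula 2, the first residue formula for ∫_{LG(n)} φ(R); the right-hand side is the Berline–Vergne fixed-point sum over the 2^n fixed points of the torus action on the Lagrangian Grassmannian.) -/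
/-!
By partial fractions and Cauchy's formula, every polynomial `p` satisfies
`∮ p(z) / ((t - z)(t + z)) dz = ∑_{ε = ±1} -2πi p(εt) / (2εt)`. The denominator separates the
variables, and integrating out the last variable of a polynomial leaves a polynomial in the
others, so the one-variable rules multiply: for `P = V · ∏_{i<j} (Xⱼ - Xᵢ)` the residue at
infinity is `∑_ε P(s) / ∏ᵢ 2sᵢ` with `s = εt`, up to the constant `∏_{i<j} (tᵢ + tⱼ)(tⱼ - tᵢ)`.
That constant equals `∏_{i<j} (sᵢ + sⱼ)(sⱼ - sᵢ)` because `sᵢ² = tᵢ²`, so the Vandermonde factor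
of `P(s)` cancels and leaves `∏_{i<j} (sᵢ + sⱼ)`, which together with `∏ᵢ 2sᵢ` is
`∏_{i≤j} (sᵢ + sⱼ)`.
-/

open Finset Metric Complex Real Set

theorem iterCircleIntegral_const_mul (c : ℂ) {n : ℕ} (f : (Fin n → ℂ) → ℂ) (R : Fin n → ℝ) :
    iterCircleIntegral n (fun z => c * f z) R = c * iterCircleIntegral n f R := by
  induction n with
  | zero => rfl
  | succ n ih => simp only [iterCircleIntegral, ih, circleIntegral.integral_const_mul]

namespace MvPolynomial

variable {R : Type*} [CommSemiring R] {n : ℕ}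

theorem eval_snoc_eq_eval_aeval (P : MvPolynomial (Fin (n + 1)) R) (y : Fin n → R) (z : R) :
    eval (Fin.snoc y z) P =
      eval y (aeval (Fin.snoc X (C z) : Fin (n + 1) → MvPolynomial (Fin n) R) P) := by
  rw [← aeval_eq_eval, ← aeval_eq_eval, comp_aeval_apply]
  congr 2
  funext i
  refine Fin.lastCases ?_ (fun j => ?_) i <;> simp

theorem eval_snoc_eq_polynomial_eval_aeval (P : MvPolynomial (Fin (n + 1)) R) (y : Fin n → R)
    (z : R) :
    eval (Fin.snoc y z) P = (aeval (Fin.snoc (fun i => Polynomial.C (y i)) Polynomial.X :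
      Fin (n + 1) → Polynomial R) P).eval z := by
  rw [← aeval_eq_eval, ← Polynomial.coe_aeval_eq_eval, comp_aeval_apply]
  congr 2
  funext i
  refine Fin.lastCases ?_ (fun j => ?_) i <;> simp

end MvPolynomial

open Polynomial in
theorem iterCircleIntegral_eval_mul_prod {κ : Type*} [Fintype κ] {n : ℕ} (g : Fin n → ℂ → ℂ)
    (w x : Fin n → κ → ℂ) (R : Fin n → ℝ)
    (hquad : ∀ i (p : ℂ[X]), (∮ z in C(0, R i), p.eval z * g i z) = ∑ k, w i k * p.eval (x i k))
    (P : MvPolynomial (Fin n) ℂ) :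
    iterCircleIntegral n (fun z => MvPolynomial.eval z P * ∏ i, g i (z i)) R =
      ∑ ε : Fin n → κ, (∏ i, w i (ε i)) * MvPolynomial.eval (fun i => x i (ε i)) P := by
  induction n with
  | zero => simp [iterCircleIntegral, Subsingleton.elim (fun i : Fin 0 => x i _) Fin.elim0]
  | succ n ih =>
    let Q : (Fin n → κ) → ℂ[X] := fun ε =>
      MvPolynomial.aeval (Fin.snoc (fun i => C (x i.castSucc (ε i))) X : Fin (n + 1) → ℂ[X]) P
    have inner : ∀ z, iterCircleIntegral n (fun y => MvPolynomial.eval (Fin.snoc y z) P *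
          ∏ i, g i ((Fin.snoc y z : Fin (n + 1) → ℂ) i)) (fun i => R i.castSucc) =
        (∑ ε : Fin n → κ, (∏ i, w i.castSucc (ε i)) • Q ε).eval z * g (Fin.last n) z := by
      intro z
      have split : (fun y => MvPolynomial.eval (Fin.snoc y z) P *
            ∏ i, g i ((Fin.snoc y z : Fin (n + 1) → ℂ) i)) =
          fun y => g (Fin.last n) z * (MvPolynomial.eval y
            (MvPolynomial.aeval (Fin.snoc MvPolynomial.X (MvPolynomial.C z) :
              Fin (n + 1) → MvPolynomial (Fin n) ℂ) P) * ∏ i : Fin n, g i.castSucc (y i)) := by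
        funext y
        rw [MvPolynomial.eval_snoc_eq_eval_aeval, Fin.prod_univ_castSucc]
        simp only [Fin.snoc_castSucc, Fin.snoc_last]
        ring
      rw [split, iterCircleIntegral_const_mul, ih _ _ _ _ (fun i => hquad i.castSucc),
        eval_finsetSum, mul_comm, sum_mul, sum_mul]
      refine Finset.sum_congr rfl fun ε _ => ?_
      rw [eval_smul, smul_eq_mul, ← MvPolynomial.eval_snoc_eq_polynomial_eval_aeval,
        MvPolynomial.eval_snoc_eq_eval_aeval]
    simp only [iterCircleIntegral, inner]
    rw [hquad]
    simp only [eval_finsetSum, eval_smul, smul_eq_mul, mul_sum]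
    rw [← (Fin.snocEquiv fun _ => κ).sum_comp, Fintype.sum_prod_type]
    refine Finset.sum_congr rfl fun k _ => Finset.sum_congr rfl fun ε _ => ?_
    have snoc_nodes : (fun i => x i ((Fin.snoc ε k : Fin (n + 1) → κ) i)) =
        Fin.snoc (fun i => x i.castSucc (ε i)) (x (Fin.last n) k) := by
      funext i
      refine Fin.lastCases ?_ (fun j => ?_) i <;> simp
    simp only [Fin.snocEquiv_apply, Fin.prod_univ_castSucc, Fin.snoc_castSucc, Fin.snoc_last,
      snoc_nodes, Q, ← MvPolynomial.eval_snoc_eq_polynomial_eval_aeval]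
    ring

theorem circleIntegral_mul_inv_sub_mul_add {f : ℂ → ℂ} {t : ℂ} {R : ℝ}
    (hf : DifferentiableOn ℂ f (closedBall 0 R)) (ht : t ≠ 0) (htR : ‖t‖ < R) :
    (∮ z in C(0, R), f z * ((t - z) * (t + z))⁻¹) = π * I / t * (f (-t) - f t) := by
  have hR : 0 ≤ R := (norm_nonneg t).trans htR.le
  have mem_ball : ∀ s : ℂ, ‖s‖ = ‖t‖ → s ∈ ball (0 : ℂ) R := fun s hs => by simpa [hs]
  have integrable : ∀ s : ℂ, ‖s‖ = ‖t‖ → CircleIntegrable (fun z => (z - s)⁻¹ • f z) 0 R :=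
    fun s hs => (circleIntegrable_sub_inv_iff.2 (Or.inr fun h => by
      simp [abs_of_nonneg hR, hs] at h; exact htR.ne h)).smul_continuousOn
        (hf.continuousOn.mono (by simpa [abs_of_nonneg hR] using sphere_subset_closedBall))
  have partial_fractions : EqOn (fun z => f z * ((t - z) * (t + z))⁻¹)
      (fun z => (2 * t)⁻¹ • ((z - -t)⁻¹ • f z - (z - t)⁻¹ • f z))
      (sphere 0 R) := by
    intro z hz
    have hz : ‖z‖ = R := by simpa using hz
    have h₁ : t - z ≠ 0 := fun h => htR.ne (by rw [sub_eq_zero.1 h, hz])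
    have h₂ : t + z ≠ 0 := fun h => htR.ne (by rw [eq_neg_of_add_eq_zero_left h, norm_neg, hz])
    have h₃ : z - -t ≠ 0 := by rwa [sub_neg_eq_add, add_comm]
    have h₄ : z - t ≠ 0 := fun h => h₁ (by rw [← neg_sub, h, neg_zero])
    simp only [smul_eq_mul]
    field_simp
    ring
  rw [circleIntegral.integral_congr hR partial_fractions,
    circleIntegral.integral_smul,
    circleIntegral.integral_sub (integrable _ (norm_neg t)) (integrable t rfl),
    hf.circleIntegral_sub_inv_smul (mem_ball _ (norm_neg t)),
    hf.circleIntegral_sub_inv_smul (mem_ball t rfl)]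
  simp only [smul_eq_mul]
  field_simp

theorem circleIntegral_mul_inv_sub_mul_add_eq_sum_units {f : ℂ → ℂ} {t : ℂ} {R : ℝ}
    (hf : DifferentiableOn ℂ f (closedBall 0 R)) (ht : t ≠ 0) (htR : ‖t‖ < R) :
    (∮ z in C(0, R), f z * ((t - z) * (t + z))⁻¹) =
      ∑ ε : ℤˣ, -(2 * π * I) / ((ε : ℤ) * t + (ε : ℤ) * t) * f ((ε : ℤ) * t) := by
  rw [circleIntegral_mul_inv_sub_mul_add hf ht htR, UnitsInt.univ, sum_pair (by decide)]
  simp only [Units.val_one, Units.val_neg, Int.cast_one, Int.cast_neg, one_mul, neg_mul]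
  field_simp
  ring

theorem Finset.prod_filter_le_eq_prod_diag_mul_prod_filter_lt {ι M : Type*} [Fintype ι]
    [LinearOrder ι] [CommMonoid M] (f : ι × ι → M) :
    ∏ p ∈ univ.filter (fun p : ι × ι => p.1 ≤ p.2), f p =
      (∏ i, f (i, i)) * ∏ p ∈ univ.filter (fun p : ι × ι => p.1 < p.2), f p := by
  have split : univ.filter (fun p : ι × ι => p.1 ≤ p.2) =
      (univ.filter fun p : ι × ι => p.1 < p.2).disjUnion univ.diag
        (disjoint_left.2 fun p hlt hdiag => (mem_filter.1 hlt).2.ne (mem_diag.1 hdiag).2) := by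
    ext p
    simp [le_iff_lt_or_eq]
  rw [split, prod_disjUnion, prod_diag, mul_comm]

theorem Int.cast_units_mul_sq {R : Type*} [Ring R] (ε : ℤˣ) (a : R) :
    (((ε : ℤ) : R) * a) ^ 2 = a ^ 2 := by
  rcases Int.units_eq_one_or ε with rfl | rfl <;> simp

theorem residue_term_eq_fixedPoint_term {n : ℕ} (s : Fin n → ℂ)
    (hs : ∀ i j, i ≠ j → s i ^ 2 ≠ s j ^ 2) (v : ℂ) :
    (-1) ^ n * ((2 * (π : ℂ) * I) ^ n)⁻¹ *
      ((∏ p ∈ univ.filter (fun p : Fin n × Fin n => p.1 < p.2),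
          ((s p.1 + s p.2) * (s p.2 - s p.1)))⁻¹ *
        ((∏ i, -(2 * π * I) / (s i + s i)) *
          (v * ∏ p ∈ univ.filter (fun p : Fin n × Fin n => p.1 < p.2), (s p.2 - s p.1)))) =
      v / ∏ p ∈ univ.filter (fun p : Fin n × Fin n => p.1 ≤ p.2), (s p.1 + s p.2) := by
  have hΔ : ∏ p ∈ univ.filter (fun p : Fin n × Fin n => p.1 < p.2), (s p.2 - s p.1) ≠ 0 :=
    prod_ne_zero_iff.2 fun p hp h => hs p.1 p.2 (mem_filter.1 hp).2.ne (by
      rw [sub_eq_zero.1 h])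
  rw [prod_mul_distrib, prod_div_distrib, prod_const, card_univ, Fintype.card_fin,
    neg_pow (2 * (π : ℂ) * I), prod_filter_le_eq_prod_diag_mul_prod_filter_lt]
  set c := (2 * (π : ℂ) * I) ^ n
  set δ := ∏ p ∈ univ.filter (fun p : Fin n × Fin n => p.1 < p.2), (s p.2 - s p.1)
  have cancel : (-1) ^ n * (-1) ^ n * (c * c⁻¹) * (δ * δ⁻¹) = (1 : ℂ) := by
    rw [mul_inv_cancel₀ (pow_ne_zero _ two_pi_I_ne_zero), mul_inv_cancel₀ hΔ, ← mul_pow]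
    norm_num
  clear_value c δ
  simp only [div_eq_mul_inv, mul_inv]
  linear_combination v * (∏ p ∈ univ.filter (fun p : Fin n × Fin n => p.1 < p.2),
    (s p.1 + s p.2))⁻¹ * (∏ i, (s i + s i))⁻¹ * cancel

theorem lagrangian_residue_formula_v1_general (n : ℕ) (t : Fin n → ℂ)
    (ht0 : ∀ i, t i ≠ 0) (ht2 : ∀ i j, i ≠ j → t i ^ 2 ≠ t j ^ 2)
    (V : MvPolynomial (Fin n) ℂ)
    (R : Fin n → ℝ) (hR : ∀ j i, ‖t i‖ < R j) :
    iterResInfty n (fun z =>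
        MvPolynomial.eval z V *
          (∏ p ∈ Finset.univ.filter (fun p : Fin n × Fin n => p.1 < p.2),
            (z p.2 - z p.1)) /
          ((∏ i : Fin n, ((t i - z i) * (t i + z i))) *
            ∏ p ∈ Finset.univ.filter (fun p : Fin n × Fin n => p.1 < p.2),
              ((t p.1 + t p.2) * (t p.2 - t p.1)))) R =
      ∑ ε : Fin n → ℤˣ,
        MvPolynomial.eval (fun i => ((ε i : ℤ) : ℂ) * t i) V /
          ∏ p ∈ Finset.univ.filter (fun p : Fin n × Fin n => p.1 ≤ p.2),
            (((ε p.1 : ℤ) : ℂ) * t p.1 + ((ε p.2 : ℤ) : ℂ) * t p.2) := by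
  set lt := univ.filter (fun p : Fin n × Fin n => p.1 < p.2)
  set P := V * ∏ p ∈ lt, (MvPolynomial.X p.2 - MvPolynomial.X p.1)
  have integrand : (fun z => MvPolynomial.eval z V * (∏ p ∈ lt, (z p.2 - z p.1)) /
      ((∏ i, ((t i - z i) * (t i + z i))) * ∏ p ∈ lt, ((t p.1 + t p.2) * (t p.2 - t p.1)))) =
      fun z => (∏ p ∈ lt, ((t p.1 + t p.2) * (t p.2 - t p.1)))⁻¹ *
        (MvPolynomial.eval z P * ∏ i, ((t i - z i) * (t i + z i))⁻¹) := by
    funext z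
    simp only [P, map_mul, map_prod, map_sub, MvPolynomial.eval_X, prod_inv_distrib]
    ring
  rw [iterResInfty, integrand, iterCircleIntegral_const_mul,
    iterCircleIntegral_eval_mul_prod _ _ _ _ (fun i p =>
      circleIntegral_mul_inv_sub_mul_add_eq_sum_units p.differentiable.differentiableOn
        (ht0 i) (hR i i)), mul_sum, mul_sum]
  refine sum_congr rfl fun ε _ => ?_
  set s := fun i => ((ε i : ℤ) : ℂ) * t i
  have same_squares : ∀ i, t i ^ 2 = s i ^ 2 :=
    fun i => (Int.cast_units_mul_sq (ε i) (t i)).symm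
  have hC : ∏ p ∈ lt, ((t p.1 + t p.2) * (t p.2 - t p.1)) =
      ∏ p ∈ lt, ((s p.1 + s p.2) * (s p.2 - s p.1)) := prod_congr rfl fun p _ => by
    linear_combination same_squares p.2 - same_squares p.1
  rw [hC]
  simp only [P, map_mul, map_prod, map_sub, MvPolynomial.eval_X]
  exact residue_term_eq_fixedPoint_term s
    (fun i j hij => by simpa [← same_squares] using ht2 i j hij) _

/-- Formula 2, first residue formula for `∫_{LG(n)} φ(𝓡)`:
for `t_i ≠ 0`, `t_i² ≠ t_j²` (`i ≠ j`) and `V` symmetric, the `n`-fold iterated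
residue at infinity of
`V(z) ∏_{i<j}(z_j−z_i) / [∏_i (t_i−z_i)(t_i+z_i) · ∏_{i<j}(t_i+t_j)(t_j−t_i)]`
equals `∑_{ε∈{±1}ⁿ} V(ε₁t₁,…,ε_n t_n) / ∏_{i≤j}(ε_i t_i + ε_j t_j)`
(the `i = j` factor being `2ε_i t_i`). Signs `±1` are modelled by `ℤˣ`. -/
theorem lagrangian_residue_formula_v1 (n : ℕ) (t : Fin n → ℂ)
    (ht0 : ∀ i, t i ≠ 0) (ht2 : ∀ i j, i ≠ j → t i ^ 2 ≠ t j ^ 2)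
    (V : MvPolynomial (Fin n) ℂ) (hV : V.IsSymmetric)
    (R : Fin n → ℝ) (hR : ∀ j i, ‖t i‖ < R j) :
    iterResInfty n (fun z =>
        MvPolynomial.eval z V *
          (∏ p ∈ Finset.univ.filter (fun p : Fin n × Fin n => p.1 < p.2),
            (z p.2 - z p.1)) /
          ((∏ i : Fin n, ((t i - z i) * (t i + z i))) *
            ∏ p ∈ Finset.univ.filter (fun p : Fin n × Fin n => p.1 < p.2),
              ((t p.1 + t p.2) * (t p.2 - t p.1)))) R =
      ∑ ε : Fin n → ℤˣ,
        MvPolynomial.eval (fun i => ((ε i : ℤ) : ℂ) * t i) V /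
          ∏ p ∈ Finset.univ.filter (fun p : Fin n × Fin n => p.1 ≤ p.2),
            (((ε p.1 : ℤ) : ℂ) * t p.1 + ((ε p.2 : ℤ) : ℂ) * t p.2) :=
  lagrangian_residue_formula_v1_general n t ht0 ht2 V R hR
end
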